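/- arXiv:1901.07107 — 6 statements merged into one kernel-verified Lean document; each statement's English description precedes it below -/
import Mathlib

section
/- Let f be a superadditive set function and w a cut function (i.e., any posimodular normalised set function) on a finite set V, and set h = f + w. Suppose λ ≥ 0, α ≥ 1, β ≥ 0, and X, Y ⊆ V satisfy h(X) ≤ αλ and w(Y) ≤ βλ. Then h(X \ Y) + h(X ∩ Y) ≤ (α + 2β)λ. -/
/-! Superadditivity gives `f (X \ Y) + f (X ∩ Y) ≤ f X`. Posimodularity at `(X, Y)` bounds
`w (X \ Y) + w (Y \ X)` by `w X + w Y`, and at `(Y, Y \ X)` it bounds `w (X ∩ Y)` by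
`w Y + w (Y \ X)`; adding the two, `w (Y \ X)` cancels and the cut part grows by at most
`2 w Y ≤ 2βλ`. -/

section SetFunction

variable {α M : Type*} [GeneralizedBooleanAlgebra α] [AddCommMonoid M] [PartialOrder M]

def Posimodular (w : α → M) : Prop :=
  ∀ A B : α, w (A \ B) + w (B \ A) ≤ w A + w B

theorem superadditive_sdiff_add_inf_le {f : α → M}
    (hf : ∀ X Y : α, Disjoint X Y → f X + f Y ≤ f (X ⊔ Y)) (X Y : α) :
    f (X \ Y) + f (X ⊓ Y) ≤ f X := by
  simpa only [sup_sdiff_inf] using hf (X \ Y) (X ⊓ Y) disjoint_inf_sdiff.symm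

theorem Posimodular.inf_le {w : α → M} (hw : Posimodular w) (hw0 : w ⊥ = 0) (X Y : α) :
    w (X ⊓ Y) ≤ w Y + w (Y \ X) := by
  simpa only [sdiff_sdiff_right_self, inf_comm Y X, sdiff_sdiff_self, hw0,
    add_zero] using hw Y (Y \ X)

theorem Posimodular.sdiff_add_inf_le [IsOrderedAddMonoid M] {w : α → M} (hw : Posimodular w)
    (hw0 : w ⊥ = 0) (X Y : α) : w (X \ Y) + w (X ⊓ Y) ≤ w X + (w Y + w Y) :=
  calc w (X \ Y) + w (X ⊓ Y) ≤ w (X \ Y) + (w Y + w (Y \ X)) :=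
        add_le_add_right (hw.inf_le hw0 X Y) _
    _ = (w (X \ Y) + w (Y \ X)) + w Y := by abel
    _ ≤ (w X + w Y) + w Y := add_le_add_left (hw X Y) _
    _ = w X + (w Y + w Y) := add_assoc _ _ _

end SetFunction

theorem cut_splitting_general {V : Type*} [DecidableEq V]
    (f w : Finset V → WithTop ℚ)
    (hfsup : ∀ X Y : Finset V, Disjoint X Y → f X + f Y ≤ f (X ∪ Y))
    (hwempty : w ∅ = 0)
    (hwpos : ∀ A B : Finset V, w (A \ B) + w (B \ A) ≤ w A + w B)
    (lam α β : ℚ)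
    (X Y : Finset V)
    (hX : f X + w X ≤ ((α * lam : ℚ) : WithTop ℚ))
    (hY : w Y ≤ ((β * lam : ℚ) : WithTop ℚ)) :
    (f (X \ Y) + w (X \ Y)) + (f (X ∩ Y) + w (X ∩ Y))
      ≤ (((α + 2 * β) * lam : ℚ) : WithTop ℚ) := by
  have hf : f (X \ Y) + f (X ∩ Y) ≤ f X := superadditive_sdiff_add_inf_le hfsup X Y
  have hw : w (X \ Y) + w (X ∩ Y) ≤ w X + (w Y + w Y) :=
    Posimodular.sdiff_add_inf_le hwpos hwempty X Y
  calc (f (X \ Y) + w (X \ Y)) + (f (X ∩ Y) + w (X ∩ Y))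
      = (f (X \ Y) + f (X ∩ Y)) + (w (X \ Y) + w (X ∩ Y)) := by abel
    _ ≤ f X + (w X + (w Y + w Y)) := add_le_add hf hw
    _ = (f X + w X) + (w Y + w Y) := (add_assoc _ _ _).symm
    _ ≤ ((α * lam + (β * lam + β * lam) : ℚ) : WithTop ℚ) := by
        rw [WithTop.coe_add, WithTop.coe_add]; exact add_le_add hX (add_le_add hY hY)
    _ = (((α + 2 * β) * lam : ℚ) : WithTop ℚ) := by congr 1; ring

/-- Splitting a solution of a (bounded) Generalised Min-Cut objective `h = f + w`:
if `f` is superadditive, `w` is posimodular and normalised, `h X ≤ α·λ` and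
`w Y ≤ β·λ`, then `h (X \ Y) + h (X ∩ Y) ≤ (α + 2β)·λ`. -/
theorem cut_splitting {V : Type*} [Fintype V] [DecidableEq V]
    (f w : Finset V → WithTop ℚ)
    (hfempty : f ∅ = 0) (hfnonneg : ∀ X : Finset V, 0 ≤ f X)
    (hfsup : ∀ X Y : Finset V, Disjoint X Y → f X + f Y ≤ f (X ∪ Y))
    (hwempty : w ∅ = 0) (hwnonneg : ∀ X : Finset V, 0 ≤ w X)
    (hwpos : ∀ A B : Finset V, w (A \ B) + w (B \ A) ≤ w A + w B)
    (lam α β : ℚ) (hlam : 0 ≤ lam) (hα : 1 ≤ α) (hβ : 0 ≤ β)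
    (X Y : Finset V)
    (hX : f X + w X ≤ ((α * lam : ℚ) : WithTop ℚ))
    (hY : w Y ≤ ((β * lam : ℚ) : WithTop ℚ)) :
    (f (X \ Y) + w (X \ Y)) + (f (X ∩ Y) + w (X ∩ Y))
      ≤ (((α + 2 * β) * lam : ℚ) : WithTop ℚ) :=
  cut_splitting_general f w hfsup hwempty hwpos lam α β X Y hX hY
end

section
/- Every α-SDS k-set function is α-SEDS: if a normalised k-set function f on V is α-SIM and satisfies f(X₁, ..., X_k) ≤ α · f(X₁ ∪ Y₁, ..., X_k ∪ Y_k) for all pairwise disjoint X₁, ..., X_k, Y₁, ..., Y_k ⊆ V, then for all pairwise disjoint X₁, ..., X_k ⊆ V and pairwise disjoint Y₁, ..., Y_k ⊆ V, f(X₁ \ Y₁, ..., X_k \ Y_k) ≤ α · (f(X₁, ..., X_k) + f(Y₁, ..., Y_k)). -/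
lemma withTop_mul_le_mul_left {α : ℚ} (hα : 0 ≤ α) {a b : WithTop ℚ} (h : a ≤ b) :
    (α : WithTop ℚ) * a ≤ (α : WithTop ℚ) * b := by
  rcases eq_or_ne b ⊤ with rfl | hb
  · rcases eq_or_lt_of_le hα with rfl | hpos
    · simp
    · rw [WithTop.mul_top (by exact_mod_cast hpos.ne' : (α : WithTop ℚ) ≠ 0)]
      exact le_top
  · lift b to ℚ using hb
    lift a to ℚ using (h.trans_lt (WithTop.coe_lt_top _)).ne
    rw [← WithTop.coe_mul, ← WithTop.coe_mul, WithTop.coe_le_coe]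
    exact mul_le_mul_of_nonneg_left (by exact_mod_cast h) hα

/-- Every α-SDS k-set function is α-SEDS. A k-set function on `V` is modelled as a
function on k-tuples of subsets of `V`, with all conditions imposed on pairwise
disjoint tuples. -/
theorem sds_is_seds {V : Type*} [Fintype V] [DecidableEq V] (k : ℕ)
    (f : (Fin k → Finset V) → WithTop ℚ) (α : ℚ) (hα : 1 ≤ α)
    -- f is normalised
    (hempty : f (fun _ => ∅) = 0)
    (hnonneg : ∀ X : Fin k → Finset V, 0 ≤ f X)
    -- f is α-SIM
    (hsim : ∀ X Y : Fin k → Finset V,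
      Pairwise (Function.onFun Disjoint X) → Pairwise (Function.onFun Disjoint Y) →
      Finset.univ.biUnion X = Finset.univ.biUnion Y →
      f X ≤ ((α : WithTop ℚ)) * f Y)
    -- the α-SDS condition: all 2k sets pairwise disjoint
    (hsds : ∀ X Y : Fin k → Finset V,
      Pairwise (Function.onFun Disjoint X) → Pairwise (Function.onFun Disjoint Y) →
      (∀ i j : Fin k, Disjoint (X i) (Y j)) →
      f X ≤ ((α : WithTop ℚ)) * f (fun i => X i ∪ Y i)) :
    -- conclusion: the α-SEDS condition
    ∀ X Y : Fin k → Finset V,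
      Pairwise (Function.onFun Disjoint X) → Pairwise (Function.onFun Disjoint Y) →
      f (fun i => X i \ Y i) ≤ ((α : WithTop ℚ)) * (f X + f Y) := by
  intro X Y hX hY
  have hA : Pairwise (Function.onFun Disjoint fun i => X i \ Y i) := fun i j hij =>
    Finset.disjoint_of_subset_left (Finset.sdiff_subset)
      (Finset.disjoint_of_subset_right (Finset.sdiff_subset) (hX hij))
  have hB : Pairwise (Function.onFun Disjoint fun i => X i ∩ Y i) := fun i j hij =>
    Finset.disjoint_of_subset_left (Finset.inter_subset_left)
      (Finset.disjoint_of_subset_right (Finset.inter_subset_left) (hX hij))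
  have hAB : ∀ i j : Fin k, Disjoint (X i \ Y i) (X j ∩ Y j) := by
    intro i j
    rcases eq_or_ne i j with rfl | hij
    · exact Finset.disjoint_of_subset_right (Finset.inter_subset_right)
        (Finset.sdiff_disjoint)
    · exact Finset.disjoint_of_subset_left (Finset.sdiff_subset)
        (Finset.disjoint_of_subset_right (Finset.inter_subset_left) (hX hij))
  have h1 := hsds _ _ hA hB hAB
  have h2 : (fun i => (X i \ Y i) ∪ (X i ∩ Y i)) = X := by
    funext i; exact Finset.sdiff_union_inter (X i) (Y i)
  rw [h2] at h1
  refine h1.trans ?_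
  have hmul : f X ≤ f X + f Y := le_add_of_nonneg_right (hnonneg Y)
  exact withTop_mul_le_mul_left (le_trans zero_le_one hα) hmul
end

section
/- For every α-SEDS k-set function f on a finite set V, the set function g defined by g(X) = (1/α) · f(X, ∅, ..., ∅) is α-EDS and α²-approximates f; that is: (i) g is normalised, (ii) g(X \ Y) ≤ α · (g(X) + g(Y)) for all X, Y ⊆ V, and (iii) g(X₁ ∪ ⋯ ∪ X_k) ≤ f(X₁, ..., X_k) ≤ α² · g(X₁ ∪ ⋯ ∪ X_k) for all pairwise disjoint X₁, ..., X_k ⊆ V. -/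
private lemma wt_mul_le_mul {c : ℚ} (hc : 0 < c) {a b : WithTop ℚ} (hab : a ≤ b) :
    (c : WithTop ℚ) * a ≤ (c : WithTop ℚ) * b := by
  rcases eq_or_ne b ⊤ with rfl | hb
  · rw [WithTop.mul_top (by exact_mod_cast hc.ne')]
    exact le_top
  · lift b to ℚ using hb
    lift a to ℚ using (hab.trans_lt (WithTop.coe_lt_top _)).ne
    rw [← WithTop.coe_mul, ← WithTop.coe_mul, WithTop.coe_le_coe]
    exact mul_le_mul_of_nonneg_left (by exact_mod_cast hab) hc.le

private lemma wt_mul_add {c : ℚ} (hc : c ≠ 0) (a b : WithTop ℚ) :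
    (c : WithTop ℚ) * (a + b) = (c : WithTop ℚ) * a + (c : WithTop ℚ) * b := by
  have hc' : (c : WithTop ℚ) ≠ 0 := by exact_mod_cast hc
  rcases eq_or_ne a ⊤ with rfl | ha
  · rw [WithTop.top_add, WithTop.mul_top hc', WithTop.top_add]
  rcases eq_or_ne b ⊤ with rfl | hb
  · rw [WithTop.add_top, WithTop.mul_top hc', WithTop.add_top]
  lift a to ℚ using ha
  lift b to ℚ using hb
  rw [← WithTop.coe_add, ← WithTop.coe_mul, ← WithTop.coe_mul, ← WithTop.coe_mul,
    ← WithTop.coe_add, mul_add]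

private lemma wt_inv_cancel {c : ℚ} (hc : 0 < c) (a : WithTop ℚ) :
    ((c⁻¹ : ℚ) : WithTop ℚ) * ((c : WithTop ℚ) * a) = a := by
  rw [← mul_assoc, ← WithTop.coe_mul, inv_mul_cancel₀ hc.ne', WithTop.coe_one, one_mul]

/-- For every α-SEDS (k+1)-set function `f` on `V`, the set function
`g X = (1/α) · f (X, ∅, …, ∅)` is α-EDS and α²-approximates `f`. -/
theorem seds_approx_eds {V : Type*} [Fintype V] [DecidableEq V] (k : ℕ)
    (f : (Fin (k + 1) → Finset V) → WithTop ℚ) (α : ℚ) (hα : 1 ≤ α)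
    -- f is normalised
    (hempty : f (fun _ => ∅) = 0)
    (hnonneg : ∀ X : Fin (k + 1) → Finset V, 0 ≤ f X)
    -- f is α-SIM
    (hsim : ∀ X Y : Fin (k + 1) → Finset V,
      Pairwise (Function.onFun Disjoint X) → Pairwise (Function.onFun Disjoint Y) →
      Finset.univ.biUnion X = Finset.univ.biUnion Y →
      f X ≤ ((α : WithTop ℚ)) * f Y)
    -- f is α-SEDS
    (hseds : ∀ X Y : Fin (k + 1) → Finset V,
      Pairwise (Function.onFun Disjoint X) → Pairwise (Function.onFun Disjoint Y) →
      f (fun i => X i \ Y i) ≤ ((α : WithTop ℚ)) * (f X + f Y))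
    -- the definition of g
    (g : Finset V → WithTop ℚ)
    (hg : ∀ X : Finset V,
      g X = (((α⁻¹ : ℚ)) : WithTop ℚ) * f (fun i => if i = 0 then X else ∅)) :
    -- (i) g is normalised
    (g ∅ = 0 ∧ ∀ X : Finset V, 0 ≤ g X) ∧
    -- (ii) g is α-EDS
    (∀ X Y : Finset V, g (X \ Y) ≤ ((α : WithTop ℚ)) * (g X + g Y)) ∧
    -- (iii) g α²-approximates f
    (∀ X : Fin (k + 1) → Finset V, Pairwise (Function.onFun Disjoint X) →
      g (Finset.univ.biUnion X) ≤ f X ∧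
      f X ≤ (((α ^ 2 : ℚ)) : WithTop ℚ) * g (Finset.univ.biUnion X)) := by
  have hαpos : 0 < α := lt_of_lt_of_le one_pos hα
  set δ : Finset V → Fin (k + 1) → Finset V :=
    fun X i => if i = 0 then X else ∅ with hδ
  have hδdisj : ∀ X, Pairwise (Function.onFun Disjoint (δ X)) := by
    intro X i j hij
    unfold Function.onFun
    simp only [hδ]
    split_ifs with h1 h2 h2
    · exact absurd (h1.trans h2.symm) hij
    · simp
    · simp
    · simp
  have hδunion : ∀ X, Finset.univ.biUnion (δ X) = X := by
    intro X
    ext a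
    simp only [hδ, Finset.mem_biUnion, Finset.mem_univ, true_and]
    constructor
    · rintro ⟨i, hi⟩
      split_ifs at hi with h
      · exact hi
      · simp at hi
    · intro ha
      exact ⟨0, by simp [ha]⟩
  have hfd : ∀ X, f (δ X) = (α : WithTop ℚ) * g X := by
    intro X
    rw [hg X, ← mul_assoc, ← WithTop.coe_mul, mul_inv_cancel₀ hαpos.ne',
      WithTop.coe_one, one_mul]
  have hg0 : g ∅ = 0 := by
    rw [hg]
    have : (fun i : Fin (k + 1) => if i = 0 then (∅ : Finset V) else ∅) = fun _ => ∅ := by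
      funext i; split <;> rfl
    rw [this, hempty, mul_zero]
  have hgnn : ∀ X, 0 ≤ g X := by
    intro X
    rw [hg]
    have := wt_mul_le_mul (inv_pos.mpr hαpos) (hnonneg (δ X))
    rwa [mul_zero] at this
  refine ⟨⟨hg0, hgnn⟩, ?_, ?_⟩
  · -- (ii)
    intro X Y
    have hs := hseds (δ X) (δ Y) (hδdisj X) (hδdisj Y)
    have heq : (fun i => δ X i \ δ Y i) = δ (X \ Y) := by
      funext i
      simp only [hδ]
      split <;> simp
    rw [heq, hfd X, hfd Y, hfd (X \ Y)] at hs
    have h2 := wt_mul_le_mul (inv_pos.mpr hαpos) hs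
    rw [wt_inv_cancel hαpos] at h2
    calc g (X \ Y) ≤ ((α⁻¹ : ℚ) : WithTop ℚ) *
        ((α : WithTop ℚ) * ((α : WithTop ℚ) * g X + (α : WithTop ℚ) * g Y)) := h2
      _ = (α : WithTop ℚ) * (g X + g Y) := by
          rw [wt_inv_cancel hαpos, wt_mul_add hαpos.ne']
  · -- (iii)
    intro X hX
    have hub : Finset.univ.biUnion (δ (Finset.univ.biUnion X)) = Finset.univ.biUnion X :=
      hδunion _
    constructor
    · have h := hsim (δ (Finset.univ.biUnion X)) X (hδdisj _) hX hub
      rw [hfd] at h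
      have h2 := wt_mul_le_mul (inv_pos.mpr hαpos) h
      simp only [wt_inv_cancel hαpos] at h2
      exact h2
    · have h := hsim X (δ (Finset.univ.biUnion X)) hX (hδdisj _) hub.symm
      rw [hfd] at h
      calc f X ≤ (α : WithTop ℚ) * ((α : WithTop ℚ) * g (Finset.univ.biUnion X)) := h
        _ = ((α ^ 2 : ℚ) : WithTop ℚ) * g (Finset.univ.biUnion X) := by
            rw [← mul_assoc, ← WithTop.coe_mul, sq]
end

section
/- Let f be an α-SDS k-set function on a finite set V with n = |V|, and define g(X) = (α^{|X| - n - 1} · |X| / n) · f(X, ∅, ..., ∅) for X ⊆ V. Then g is a superadditive set function, i.e., g(∅) = 0, g ≥ 0, and g(X) + g(Y) ≤ g(X ∪ Y) for all disjoint X, Y ⊆ V. -/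
lemma sds_key_rat (α p q r : ℚ) (hα : 1 ≤ α) (a b n : ℕ) (ha : 1 ≤ a) (hb : 1 ≤ b)
    (hn : 1 ≤ n) (hq : 0 ≤ q)
    (hpq : p ≤ α * q) (hrq : r ≤ α * q) :
    α ^ ((a : ℤ) - n - 1) * a / n * p + α ^ ((b : ℤ) - n - 1) * b / n * r
      ≤ α ^ (((a + b : ℕ) : ℤ) - n - 1) * ((a + b : ℕ) : ℚ) / n * q := by
  have hα0 : (0:ℚ) < α := lt_of_lt_of_le one_pos hα
  have hne : α ≠ 0 := ne_of_gt hα0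
  have haZ : (1:ℤ) ≤ a := by exact_mod_cast ha
  have hbZ : (1:ℤ) ≤ b := by exact_mod_cast hb
  have hx : α ^ ((a : ℤ) - n - 1) * p ≤ α ^ ((a:ℤ) + b - n - 1) * q := by
    calc α ^ ((a : ℤ) - n - 1) * p ≤ α ^ ((a : ℤ) - n - 1) * (α * q) :=
          mul_le_mul_of_nonneg_left hpq (by positivity)
      _ = α ^ ((a : ℤ) - n - 1 + 1) * q := by rw [zpow_add_one₀ hne]; ring
      _ ≤ α ^ ((a:ℤ) + b - n - 1) * q := by
          apply mul_le_mul_of_nonneg_right _ hq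
          exact zpow_le_zpow_right₀ hα (by linarith)
  have hy : α ^ ((b : ℤ) - n - 1) * r ≤ α ^ ((a:ℤ) + b - n - 1) * q := by
    calc α ^ ((b : ℤ) - n - 1) * r ≤ α ^ ((b : ℤ) - n - 1) * (α * q) :=
          mul_le_mul_of_nonneg_left hrq (by positivity)
      _ = α ^ ((b : ℤ) - n - 1 + 1) * q := by rw [zpow_add_one₀ hne]; ring
      _ ≤ α ^ ((a:ℤ) + b - n - 1) * q := by
          apply mul_le_mul_of_nonneg_right _ hq
          exact zpow_le_zpow_right₀ hα (by linarith)
  have hnQ : (0:ℚ) < n := by exact_mod_cast hn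
  have e : (((a + b : ℕ) : ℤ) - n - 1) = (a:ℤ) + b - n - 1 := by push_cast; ring
  rw [e]
  calc α ^ ((a : ℤ) - n - 1) * a / n * p + α ^ ((b : ℤ) - n - 1) * b / n * r
      = (a:ℚ)/n * (α ^ ((a : ℤ) - n - 1) * p) + (b:ℚ)/n * (α ^ ((b : ℤ) - n - 1) * r) := by
        ring
    _ ≤ (a:ℚ)/n * (α ^ ((a:ℤ) + b - n - 1) * q) + (b:ℚ)/n * (α ^ ((a:ℤ) + b - n - 1) * q) := by
        gcongr
    _ = α ^ ((a:ℤ) + b - n - 1) * ((a + b : ℕ) : ℚ) / n * q := by push_cast; ring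

/-- For an α-SDS (k+1)-set function `f` on `V` with `n = |V|`, the set function
`g X = (α^(|X| - n - 1) · |X| / n) · f (X, ∅, …, ∅)` is superadditive. -/
theorem sds_superadditive_approx {V : Type*} [Fintype V] [DecidableEq V] [Nonempty V]
    (k : ℕ) (n : ℕ) (hn : n = Fintype.card V)
    (f : (Fin (k + 1) → Finset V) → WithTop ℚ) (α : ℚ) (hα : 1 ≤ α)
    -- f is normalised
    (hempty : f (fun _ => ∅) = 0)
    (hnonneg : ∀ X : Fin (k + 1) → Finset V, 0 ≤ f X)
    -- f is α-SIM
    (hsim : ∀ X Y : Fin (k + 1) → Finset V,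
      Pairwise (Function.onFun Disjoint X) → Pairwise (Function.onFun Disjoint Y) →
      Finset.univ.biUnion X = Finset.univ.biUnion Y →
      f X ≤ ((α : WithTop ℚ)) * f Y)
    -- f is α-SDS: all 2(k+1) sets pairwise disjoint
    (hsds : ∀ X Y : Fin (k + 1) → Finset V,
      Pairwise (Function.onFun Disjoint X) → Pairwise (Function.onFun Disjoint Y) →
      (∀ i j : Fin (k + 1), Disjoint (X i) (Y j)) →
      f X ≤ ((α : WithTop ℚ)) * f (fun i => X i ∪ Y i))
    -- the definition of g
    (g : Finset V → WithTop ℚ)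
    (hg : ∀ X : Finset V,
      g X = (((α ^ ((X.card : ℤ) - n - 1) * X.card / n : ℚ)) : WithTop ℚ) *
        f (fun i => if i = 0 then X else ∅)) :
    -- g is a superadditive set function
    g ∅ = 0 ∧ (∀ X : Finset V, 0 ≤ g X) ∧
    (∀ X Y : Finset V, Disjoint X Y → g X + g Y ≤ g (X ∪ Y)) := by
  have hα0 : (0:ℚ) < α := lt_of_lt_of_le one_pos hα
  have hn1 : 1 ≤ n := by rw [hn]; exact Fintype.card_pos
  have hnQ : (0:ℚ) < n := by exact_mod_cast hn1
  -- pairwise disjointness of the canonical tuple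
  have hpd : ∀ X : Finset V,
      Pairwise (Function.onFun Disjoint (fun i : Fin (k+1) => if i = 0 then X else ∅)) := by
    intro X i j hij
    simp only [Function.onFun]
    rcases eq_or_ne i 0 with hi | hi
    · rw [if_neg (show ¬ j = 0 from fun h => hij (hi.trans h.symm))]
      exact Finset.disjoint_empty_right _
    · rw [if_neg hi]
      exact Finset.disjoint_empty_left _
  -- SDS specialised
  have hF : ∀ X Y : Finset V, Disjoint X Y →
      f (fun i => if i = 0 then X else ∅) ≤
        (α : WithTop ℚ) * f (fun i => if i = 0 then X ∪ Y else ∅) := by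
    intro X Y hXY
    have hcross : ∀ i j : Fin (k+1),
        Disjoint (if i = 0 then X else ∅) (if j = 0 then Y else ∅) := by
      intro i j
      rcases eq_or_ne i 0 with hi | hi
      · rcases eq_or_ne j 0 with hj | hj
        · rw [if_pos hi, if_pos hj]; exact hXY
        · rw [if_neg hj]; exact Finset.disjoint_empty_right _
      · rw [if_neg hi]; exact Finset.disjoint_empty_left _
    have := hsds _ _ (hpd X) (hpd Y) hcross
    have he : (fun i : Fin (k+1) =>
        (if i = 0 then X else ∅) ∪ (if i = 0 then Y else ∅)) =
        (fun i : Fin (k+1) => if i = 0 then X ∪ Y else ∅) := by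
      funext i
      rcases eq_or_ne i 0 with hi | hi <;> simp [hi]
    rwa [he] at this
  -- g ∅ = 0
  have hg0 : g ∅ = 0 := by
    rw [hg]
    have : (α ^ (((∅ : Finset V).card : ℤ) - n - 1) * (∅ : Finset V).card / n : ℚ) = 0 := by
      simp
    rw [this, WithTop.coe_zero, zero_mul]
  refine ⟨hg0, ?_, ?_⟩
  · -- nonnegativity
    intro X
    rw [hg]
    set c : ℚ := α ^ ((X.card : ℤ) - n - 1) * X.card / n with hc
    have hc0 : 0 ≤ c := by positivity
    cases hv : f (fun i : Fin (k+1) => if i = 0 then X else ∅) with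
    | top =>
        rcases eq_or_lt_of_le hc0 with h0 | h0
        · rw [← h0, WithTop.coe_zero, zero_mul]
        · rw [WithTop.mul_top (by exact_mod_cast ne_of_gt h0)]
          exact le_top
    | coe q =>
        have hq : (0:ℚ) ≤ q := by
          have := hnonneg (fun i : Fin (k+1) => if i = 0 then X else ∅)
          rw [hv] at this
          exact_mod_cast this
        rw [← WithTop.coe_mul]
        exact_mod_cast mul_nonneg hc0 hq
  · -- superadditivity
    intro X Y hXY
    rcases X.eq_empty_or_nonempty with hX | hX
    · subst hX; rw [hg0, zero_add, Finset.empty_union]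
    rcases Y.eq_empty_or_nonempty with hY | hY
    · subst hY; rw [hg0, add_zero, Finset.union_empty]
    have ha : 1 ≤ X.card := Finset.card_pos.mpr hX
    have hb : 1 ≤ Y.card := Finset.card_pos.mpr hY
    have hcard : (X ∪ Y).card = X.card + Y.card := Finset.card_union_of_disjoint hXY
    have hFX := hF X Y hXY
    have hFY : f (fun i : Fin (k+1) => if i = 0 then Y else ∅) ≤
        (α : WithTop ℚ) * f (fun i : Fin (k+1) => if i = 0 then X ∪ Y else ∅) := by
      have := hF Y X hXY.symm
      rwa [Finset.union_comm Y X] at this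
    rw [hg, hg, hg, hcard]
    cases hv : f (fun i : Fin (k+1) => if i = 0 then X ∪ Y else ∅) with
    | top =>
        have hcpos : (0:ℚ) < α ^ (((X.card + Y.card : ℕ) : ℤ) - n - 1)
            * ((X.card + Y.card : ℕ) : ℚ) / n := by
          have : 0 < X.card + Y.card := by omega
          have h1 : (0:ℚ) < ((X.card + Y.card : ℕ) : ℚ) := by exact_mod_cast this
          positivity
        rw [WithTop.mul_top (by exact_mod_cast ne_of_gt hcpos)]
        exact le_top
    | coe q =>
        have hq : (0:ℚ) ≤ q := by
          have := hnonneg (fun i : Fin (k+1) => if i = 0 then X ∪ Y else ∅)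
          rw [hv] at this
          exact_mod_cast this
        rw [hv] at hFX hFY
        rw [show ((α : WithTop ℚ) * (q : WithTop ℚ)) = ((α * q : ℚ) : WithTop ℚ) by
          rw [WithTop.coe_mul]] at hFX hFY
        obtain ⟨p, hp, hpq⟩ : ∃ p : ℚ, f (fun i : Fin (k+1) => if i = 0 then X else ∅) = p
            ∧ p ≤ α * q := by
          obtain ⟨p, hp⟩ := WithTop.le_coe_iff.mp hFX
          exact ⟨p, hp.1, by exact_mod_cast hp.1 ▸ hFX⟩
        obtain ⟨r, hr, hrq⟩ : ∃ r : ℚ, f (fun i : Fin (k+1) => if i = 0 then Y else ∅) = r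
            ∧ r ≤ α * q := by
          obtain ⟨r, hr⟩ := WithTop.le_coe_iff.mp hFY
          exact ⟨r, hr.1, by exact_mod_cast hr.1 ▸ hFY⟩
        rw [hp, hr, ← WithTop.coe_mul, ← WithTop.coe_mul, ← WithTop.coe_mul, ← WithTop.coe_add]
        exact_mod_cast sds_key_rat α p q r hα X.card Y.card n ha hb hn1 hq hpq hrq
end

section
/- Let f be an α-SDS k-set function on a finite set V with n = |V| and g(X) = (α^{|X| - n - 1} · |X| / n) · f(X, ∅, ..., ∅). Then g (n·α^{n+1})-approximates f: for all pairwise disjoint X₁, ..., X_k ⊆ V, g(X₁ ∪ ⋯ ∪ X_k) ≤ f(X₁, ..., X_k) ≤ n·α^{n+1} · g(X₁ ∪ ⋯ ∪ X_k). -/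
/-! Fix pairwise disjoint `X₁, …, X_k` with union `U` of size `m`. By α-SIM, `f (U, ∅, …, ∅)` and
`f (X₁, …, X_k)` agree up to a factor `α` in each direction, and `g U` is `f (U, ∅, …, ∅)` scaled by
`c = α^(m-n-1) m / n`. Since `m ≤ n`, `c α ≤ 1`, which gives `g U ≤ f X`; and for `m ≥ 1`,
`n α^(n+1) c = α^m m ≥ α`, which gives `f X ≤ n α^(n+1) g U`. When `U = ∅` both sides vanish by
normalisation. -/

namespace WithTop

variable {α : Type*} [DecidableEq α] [MulZeroClass α] [PartialOrder α]

-- `WithTop α` is not `PosMulMono` in general (`⊤ * (-1) = ⊤`), but scaling by a finite `p ≥ 0` is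
-- monotone.
lemma coe_mul_le_coe_mul_left [PosMulMono α] {p : α} (hp : 0 ≤ p) {a b : WithTop α}
    (hab : a ≤ b) : (p : WithTop α) * a ≤ p * b := by
  induction b with
  | top =>
    rcases eq_or_ne p 0 with rfl | hp0
    · simp only [coe_zero, zero_mul, le_refl]
    · exact (mul_top (coe_ne_zero.mpr hp0)).symm ▸ le_top
  | coe b =>
    lift a to α using ne_top_of_le_ne_top coe_ne_top hab
    rw [← coe_mul, ← coe_mul, coe_le_coe]
    exact mul_le_mul_of_nonneg_left (coe_le_coe.mp hab) hp

lemma coe_mul_le_coe_mul_right [MulPosMono α] {p q : α} (hp : 0 ≤ p) (hpq : p ≤ q)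
    {a : WithTop α} (ha : 0 ≤ a) : (p : WithTop α) * a ≤ q * a := by
  induction a with
  | top =>
    rcases eq_or_lt_of_le hp with rfl | hp0
    · rw [coe_zero, zero_mul, mul_top']
      split_ifs <;> simp
    · rw [mul_top (coe_ne_zero.mpr hp0.ne'), mul_top (coe_ne_zero.mpr (hp0.trans_le hpq).ne')]
  | coe a =>
    rw [← coe_mul, ← coe_mul, coe_le_coe]
    exact mul_le_mul_of_nonneg_right hpq (coe_nonneg.mp ha)

end WithTop

section ApproxCoeff

variable {K : Type*} [Field K] [LinearOrder K] [IsStrictOrderedRing K]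

def approxCoeff (α : K) (n m : ℕ) : K := α ^ ((m : ℤ) - n - 1) * m / n

variable {α : K} {n m : ℕ}

lemma approxCoeff_nonneg (hα : 0 ≤ α) : 0 ≤ approxCoeff α n m := by
  unfold approxCoeff
  positivity

lemma approxCoeff_mul_le_one (hα : 1 ≤ α) (hmn : m ≤ n) : approxCoeff α n m * α ≤ 1 := by
  have hα0 : α ≠ 0 := (zero_lt_one.trans_le hα).ne'
  have hpow : α ^ ((m : ℤ) - n) ≤ 1 := zpow_le_one_of_nonpos₀ hα (by omega)
  have hratio : (m : K) / n ≤ 1 := div_le_one_of_le₀ (by exact_mod_cast hmn) n.cast_nonneg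
  calc approxCoeff α n m * α = α ^ ((m : ℤ) - n) * ((m : K) / n) := by
        rw [approxCoeff, mul_div_assoc, mul_right_comm, ← zpow_add_one₀ hα0, sub_add_cancel]
    _ ≤ 1 * 1 := mul_le_mul hpow hratio (by positivity) zero_le_one
    _ = 1 := one_mul 1

lemma le_mul_approxCoeff (hα : 1 ≤ α) (hm : 1 ≤ m) (hmn : m ≤ n) :
    α ≤ n * α ^ (n + 1) * approxCoeff α n m := by
  have hα0 : α ≠ 0 := (zero_lt_one.trans_le hα).ne'
  have hn0 : (n : K) ≠ 0 := by exact_mod_cast Nat.one_le_iff_ne_zero.mp (hm.trans hmn)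
  have hpow : α ^ (1 : ℤ) ≤ α ^ (m : ℤ) := zpow_le_zpow_right₀ hα (by exact_mod_cast hm)
  have hexp : α ^ (n + 1) * α ^ ((m : ℤ) - n - 1) = α ^ (m : ℤ) := by
    rw [← zpow_natCast, ← zpow_add₀ hα0]
    congr 1
    push_cast
    ring
  calc α = α ^ (1 : ℤ) * 1 := by rw [zpow_one, mul_one]
    _ ≤ α ^ (m : ℤ) * m := mul_le_mul hpow (by exact_mod_cast hm) zero_le_one (by positivity)
    _ = n * α ^ (n + 1) * approxCoeff α n m := by
        rw [approxCoeff, ← hexp]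
        field_simp

end ApproxCoeff

section SingleSlot

variable {V : Type*} {k : ℕ}

def singleSlot (U : Finset V) : Fin (k + 1) → Finset V := fun i => if i = 0 then U else ∅

lemma pairwise_disjoint_singleSlot (U : Finset V) :
    Pairwise (Function.onFun Disjoint (singleSlot (k := k) U)) := by
  intro i j hij
  by_cases hi : i = 0
  · simp [Function.onFun, singleSlot, hi, Ne.symm (hi ▸ hij)]
  · simp [Function.onFun, singleSlot, hi]

lemma biUnion_singleSlot [DecidableEq V] (U : Finset V) :
    Finset.univ.biUnion (singleSlot (k := k) U) = U := by
  ext v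
  simp only [Finset.mem_biUnion, Finset.mem_univ, true_and, singleSlot]
  exact ⟨fun ⟨i, hi⟩ => by split_ifs at hi <;> simp_all, fun hv => ⟨0, by simpa using hv⟩⟩

lemma singleSlot_empty : singleSlot (k := k) (∅ : Finset V) = fun _ => ∅ := by
  funext i
  exact ite_self ∅

end SingleSlot

theorem sds_g_approximates_general {V : Type*} [Fintype V] [DecidableEq V]
    (k : ℕ) (n : ℕ) (hn : n = Fintype.card V)
    (f : (Fin (k + 1) → Finset V) → WithTop ℚ) (α : ℚ) (hα : 1 ≤ α)
    -- f is normalised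
    (hempty : f (fun _ => ∅) = 0)
    (hnonneg : ∀ X : Fin (k + 1) → Finset V, 0 ≤ f X)
    -- f is α-SIM
    (hsim : ∀ X Y : Fin (k + 1) → Finset V,
      Pairwise (Function.onFun Disjoint X) → Pairwise (Function.onFun Disjoint Y) →
      Finset.univ.biUnion X = Finset.univ.biUnion Y →
      f X ≤ ((α : WithTop ℚ)) * f Y)
    -- the definition of g
    (g : Finset V → WithTop ℚ)
    (hg : ∀ X : Finset V,
      g X = (((α ^ ((X.card : ℤ) - n - 1) * X.card / n : ℚ)) : WithTop ℚ) *
        f (fun i => if i = 0 then X else ∅)) :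
    -- g is a superadditive set function
    -- g (n·α^(n+1))-approximates f
    ∀ X : Fin (k + 1) → Finset V, Pairwise (Function.onFun Disjoint X) →
      g (Finset.univ.biUnion X) ≤ f X ∧
      f X ≤ (((n * α ^ (n + 1) : ℚ)) : WithTop ℚ) * g (Finset.univ.biUnion X) := by
  intro X hX
  set U := Finset.univ.biUnion X
  have hα0 : 0 ≤ α := zero_le_one.trans hα
  have hmn : U.card ≤ n := hn ▸ U.card_le_univ
  have hgU : g U = approxCoeff α n U.card * f (singleSlot U) := hg U
  have hfU : f (singleSlot U) ≤ α * f X :=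
    hsim _ _ (pairwise_disjoint_singleSlot U) hX (biUnion_singleSlot U)
  have hfX : f X ≤ α * f (singleSlot U) :=
    hsim _ _ hX (pairwise_disjoint_singleSlot U) (biUnion_singleSlot U).symm
  constructor
  · calc g U ≤ approxCoeff α n U.card * (α * f X) :=
          hgU ▸ WithTop.coe_mul_le_coe_mul_left (approxCoeff_nonneg hα0) hfU
      _ = ↑(approxCoeff α n U.card * α) * f X := by rw [WithTop.coe_mul, mul_assoc]
      _ ≤ ↑(1 : ℚ) * f X := WithTop.coe_mul_le_coe_mul_right
          (mul_nonneg (approxCoeff_nonneg hα0) hα0) (approxCoeff_mul_le_one hα hmn) (hnonneg X)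
      _ = f X := by rw [WithTop.coe_one, one_mul]
  · rcases U.eq_empty_or_nonempty with hU | hU
    · rw [hU, singleSlot_empty, hempty, mul_zero] at hfX
      rw [hgU, hU, singleSlot_empty, hempty, mul_zero, mul_zero]
      exact hfX
    · calc f X ≤ ↑(n * α ^ (n + 1) * approxCoeff α n U.card) * f (singleSlot U) :=
            hfX.trans (WithTop.coe_mul_le_coe_mul_right hα0
              (le_mul_approxCoeff hα hU.card_pos hmn) (hnonneg _))
        _ = ↑(n * α ^ (n + 1) : ℚ) * g U := by rw [hgU, WithTop.coe_mul, mul_assoc]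

/-- For an α-SDS (k+1)-set function `f` on `V` with `n = |V|`, the set function
`g X = (α^(|X| - n - 1) · |X| / n) · f (X, ∅, …, ∅)` (n·α^(n+1))-approximates f. -/
theorem sds_g_approximates {V : Type*} [Fintype V] [DecidableEq V] [Nonempty V]
    (k : ℕ) (n : ℕ) (hn : n = Fintype.card V)
    (f : (Fin (k + 1) → Finset V) → WithTop ℚ) (α : ℚ) (hα : 1 ≤ α)
    -- f is normalised
    (hempty : f (fun _ => ∅) = 0)
    (hnonneg : ∀ X : Fin (k + 1) → Finset V, 0 ≤ f X)
    -- f is α-SIM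
    (hsim : ∀ X Y : Fin (k + 1) → Finset V,
      Pairwise (Function.onFun Disjoint X) → Pairwise (Function.onFun Disjoint Y) →
      Finset.univ.biUnion X = Finset.univ.biUnion Y →
      f X ≤ ((α : WithTop ℚ)) * f Y)
    -- f is α-SDS: all 2(k+1) sets pairwise disjoint
    (hsds : ∀ X Y : Fin (k + 1) → Finset V,
      Pairwise (Function.onFun Disjoint X) → Pairwise (Function.onFun Disjoint Y) →
      (∀ i j : Fin (k + 1), Disjoint (X i) (Y j)) →
      f X ≤ ((α : WithTop ℚ)) * f (fun i => X i ∪ Y i))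
    -- the definition of g
    (g : Finset V → WithTop ℚ)
    (hg : ∀ X : Finset V,
      g X = (((α ^ ((X.card : ℤ) - n - 1) * X.card / n : ℚ)) : WithTop ℚ) *
        f (fun i => if i = 0 then X else ∅)) :
    -- g is a superadditive set function
    -- g (n·α^(n+1))-approximates f
    ∀ X : Fin (k + 1) → Finset V, Pairwise (Function.onFun Disjoint X) →
      g (Finset.univ.biUnion X) ≤ f X ∧
      f X ≤ (((n * α ^ (n + 1) : ℚ)) : WithTop ℚ) * g (Finset.univ.biUnion X) :=
  sds_g_approximates_general k n hn f α hα hempty hnonneg hsim g hg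
end

section
/- Let h = f + w be the objective of a Bounded Generalised Min-Cut instance on vertex set V, where f is superadditive and w is a non-negative cut function, with all solutions (sets X ⊆ V with q ≤ |X| ≤ |V| - p) having value at least λ > 0. If X ⊆ V is a solution with h(X) ≤ αλ and X can be partitioned into α + 1 pairwise disjoint subsets Z₁, ..., Z_{α+1} each of which is itself a solution, and w is identically zero, then we obtain a contradiction; consequently, when w ≡ 0 every α-optimal solution X satisfies |X| < (α + 1)·q' for any q' such that every subset of size at least q' is a solution. Precisely: if f is superadditive, every set of size ≥ l* is a solution of value ≥ λ > 0, and f(X) ≤ αλ where α is a positive integer, then |X| < (α + 1)·l*. -/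
theorem nsmul_le_of_superadditive {α M : Type*} [DecidableEq α] [AddCommMonoid M] [PartialOrder M]
    [IsOrderedAddMonoid M] {f : Finset α → M}
    (hsup : ∀ X Y : Finset α, Disjoint X Y → f X + f Y ≤ f (X ∪ Y))
    {l : ℕ} {c : M} (hc : ∀ Z : Finset α, l ≤ Z.card → c ≤ f Z)
    {n : ℕ} (hn : 1 ≤ n) {Y : Finset α} (hY : n * l ≤ Y.card) : n • c ≤ f Y := by
  induction n, hn using Nat.le_induction generalizing Y with
  | base => simpa using hc Y (by simpa using hY)
  | succ n hn ih =>
    rw [Nat.succ_mul] at hY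
    obtain ⟨Z, hZY, hZ⟩ := Finset.exists_subset_card_eq (show l ≤ Y.card by omega)
    have hrest : n * l ≤ (Y \ Z).card := by
      rw [Finset.card_sdiff_of_subset hZY, hZ]
      omega
    calc (n + 1) • c = c + n • c := by rw [succ_nsmul, add_comm]
      _ ≤ f Z + f (Y \ Z) := add_le_add (hc Z hZ.ge) (ih hrest)
      _ ≤ f (Z ∪ (Y \ Z)) := hsup Z (Y \ Z) Finset.disjoint_sdiff
      _ = f Y := by rw [Finset.union_sdiff_of_subset hZY]

theorem card_bound_of_superadditive_general {V : Type*} [DecidableEq V]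
    (f : Finset V → WithTop ℚ)
    (hsup : ∀ X Y : Finset V, Disjoint X Y → f X + f Y ≤ f (X ∪ Y))
    (lam : ℚ) (hlam : 0 < lam) (lstar : ℕ) (α : ℕ)
    (hsol : ∀ Z : Finset V, lstar ≤ Z.card → ((lam : ℚ) : WithTop ℚ) ≤ f Z)
    (X : Finset V) (hX : f X ≤ ((α : ℚ) : WithTop ℚ) * ((lam : ℚ) : WithTop ℚ)) :
    X.card < (α + 1) * lstar := by
  by_contra! hcard
  have hlower := nsmul_le_of_superadditive hsup hsol (Nat.le_add_left 1 α) hcard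
  have hle : ((α + 1 : ℕ) • lam : ℚ) ≤ α * lam := by
    rw [← WithTop.coe_le_coe, WithTop.coe_nsmul, WithTop.coe_mul]
    exact hlower.trans hX
  rw [nsmul_eq_mul] at hle
  push_cast at hle
  linarith

/-- If `f` is superadditive, every set of size at least `l*` has value at least
`λ > 0`, and `f X ≤ α·λ` for a positive integer `α`, then `|X| < (α + 1)·l*`. -/
theorem card_bound_of_superadditive {V : Type*} [Fintype V] [DecidableEq V]
    (f : Finset V → WithTop ℚ)
    (hempty : f ∅ = 0) (hnonneg : ∀ X : Finset V, 0 ≤ f X)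
    (hsup : ∀ X Y : Finset V, Disjoint X Y → f X + f Y ≤ f (X ∪ Y))
    (lam : ℚ) (hlam : 0 < lam) (lstar : ℕ) (α : ℕ) (hα : 0 < α)
    (hsol : ∀ Z : Finset V, lstar ≤ Z.card → ((lam : ℚ) : WithTop ℚ) ≤ f Z)
    (X : Finset V) (hX : f X ≤ ((α : ℚ) : WithTop ℚ) * ((lam : ℚ) : WithTop ℚ)) :
    X.card < (α + 1) * lstar :=
  card_bound_of_superadditive_general f hsup lam hlam lstar α hsol X hX
end
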